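/- (Sector propagator prefactor bound.) Let M ≥ 2 be real and let u : ℝ → ℝ be measurable with 0 ≤ u ≤ 1, u(r) = 1 for |r| < 1 and u(r) = 0 for |r| > 2. There exists a constant c > 0, depending only on M, such that for every β > 0, every integer i ≥ 1, every sector σ = (s_+, s_−) with 0 ≤ s_± ≤ i and s_+ + s_− ≥ i − 2 and depth l = s_+ + s_− − i + 2, and every x = (x_0, x_+, x_−) ∈ ℝ³, the sector propagator C_{i,σ}(x) = (1/(16β)) · ∑_{n ∈ ℤ} ∫_{−2}^{2} ∫_{−2}^{2} e^{i(k_0 x_0 + k_+ x_+ + k_− x_−)} · u_i(k_0² + 4 cos²(π k_+/2) cos²(π k_−/2)) · v_{s_+}(cos²(π k_+/2)) · v_{s_−}(cos²(π k_−/2)) / (i k_0 − 2 cos(π k_+/2) cos(π k_−/2)) dk_+ dk_−, with k_0 = (2n+1)π/β, satisfies |C_{i,σ}(x)| ≤ c · M^{−i−l}. -/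

import Mathlib

open scoped Real

/-- The `i`-th slice cutoff of the renormalization group:
`uᵢ(r) = u(M^{2(i-1)} r) - u(M^{2i} r)`. -/
noncomputable def sliceCut (u : ℝ → ℝ) (M : ℝ) (i : ℕ) (r : ℝ) : ℝ :=
  u (M ^ (2 * (i - 1)) * r) - u (M ^ (2 * i) * r)

/-- The sector cutoffs of slice `i`. -/
noncomputable def vCut (u : ℝ → ℝ) (M : ℝ) (i s : ℕ) (r : ℝ) : ℝ :=
  if s = 0 then 1 - u (M ^ 2 * r)
  else if s = i then u (M ^ (2 * i) * r)
  else u (M ^ (2 * s) * r) - u (M ^ (2 * s + 2) * r)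

/-- The real-space sector propagator `C_{i,σ}(x)` of sector `σ = (s₊, s₋)` of slice `i`
of the half-filled Hubbard model at inverse temperature `β`, in tilted coordinates:
`C_{i,σ}(x) = (1/(16β)) ∑_{n ∈ ℤ} ∫_{-2}^{2} ∫_{-2}^{2}
  e^{i(k₀x₀ + k₊x₊ + k₋x₋)} uᵢ(k₀² + 4cos²(πk₊/2)cos²(πk₋/2))
  v_{s₊}(cos²(πk₊/2)) v_{s₋}(cos²(πk₋/2)) / (i k₀ - 2cos(πk₊/2)cos(πk₋/2))
  dk₊ dk₋`, with `k₀ = (2n+1)π/β` the Matsubara frequencies. -/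
noncomputable def sectorProp (u : ℝ → ℝ) (M β : ℝ) (i sp sm : ℕ)
    (x0 xp xm : ℝ) : ℂ :=
  (1 / (16 * β) : ℂ) * ∑' n : ℤ,
    ∫ kp in Set.Icc (-2 : ℝ) 2, ∫ km in Set.Icc (-2 : ℝ) 2,
      Complex.exp (Complex.I *
          (((2 * (n : ℝ) + 1) * π / β) * x0 + kp * xp + km * xm : ℝ)) *
        ((sliceCut u M i (((2 * (n : ℝ) + 1) * π / β) ^ 2 +
            4 * Real.cos (π * kp / 2) ^ 2 * Real.cos (π * km / 2) ^ 2) *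
          vCut u M i sp (Real.cos (π * kp / 2) ^ 2) *
          vCut u M i sm (Real.cos (π * km / 2) ^ 2) : ℝ)) /
      (Complex.I * (((2 * (n : ℝ) + 1) * π / β : ℝ) : ℂ) -
        ((2 * Real.cos (π * kp / 2) * Real.cos (π * km / 2) : ℝ) : ℂ))

open MeasureTheory

namespace SectorAux



lemma abs_sub_one_le_abs_cos {k : ℝ} (hk0 : 0 ≤ k) (hk2 : k ≤ 2) :
    |k - 1| ≤ |Real.cos (π * k / 2)| := by
  have hπ := Real.pi_pos
  have h : Real.cos (π * k / 2) = Real.sin (π / 2 - π * k / 2) :=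
    (Real.sin_pi_div_two_sub _).symm
  have habs : |π / 2 - π * k / 2| ≤ π / 2 := by
    rw [abs_le]; constructor <;> nlinarith
  have hJ := Real.mul_abs_le_abs_sin habs
  have key : 2 / π * |π / 2 - π * k / 2| = |k - 1| := by
    rw [show π / 2 - π * k / 2 = (π / 2) * (1 - k) by ring, abs_mul,
      abs_of_pos (by positivity : (0:ℝ) < π / 2), abs_sub_comm 1 k]
    field_simp
  rw [h]
  calc |k - 1| = 2 / π * |π / 2 - π * k / 2| := key.symm
    _ ≤ |Real.sin (π / 2 - π * k / 2)| := hJ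

lemma mem_two_intervals {M : ℝ} (hM : 0 < M) {s : ℕ} {k : ℝ}
    (hk : k ∈ Set.Icc (-2 : ℝ) 2) (h : Real.cos (π * k / 2) ^ 2 ≤ 2 / M ^ (2 * s)) :
    k ∈ Set.Icc (1 - Real.sqrt 2 / M ^ s) (1 + Real.sqrt 2 / M ^ s) ∪
      Set.Icc (-1 - Real.sqrt 2 / M ^ s) (-1 + Real.sqrt 2 / M ^ s) := by
  set ε : ℝ := Real.sqrt 2 / M ^ s with hε
  have hε0 : 0 ≤ ε := by positivity
  have hε2 : ε ^ 2 = 2 / M ^ (2 * s) := by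
    rw [hε, div_pow, Real.sq_sqrt (by norm_num : (0:ℝ) ≤ 2), ← pow_mul, Nat.mul_comm s 2]
  have hcos : |Real.cos (π * k / 2)| ≤ ε := by
    have := Real.sqrt_le_sqrt (h.trans_eq hε2.symm)
    rwa [Real.sqrt_sq_eq_abs, Real.sqrt_sq hε0] at this
  obtain ⟨hk1, hk2⟩ := hk
  rcases le_or_gt 0 k with hk0 | hk0
  · left
    have := (abs_sub_one_le_abs_cos hk0 hk2).trans hcos
    rw [abs_le] at this
    constructor <;> linarith [this.1, this.2]
  · right
    have hc : Real.cos (π * k / 2) = Real.cos (π * (-k) / 2) := by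
      rw [show π * (-k) / 2 = -(π * k / 2) by ring, Real.cos_neg]
    have h1 : (0:ℝ) ≤ -k := by linarith
    have h2 : -k ≤ 2 := by linarith
    have h3 : |Real.cos (π * (-k) / 2)| ≤ ε := by rw [← hc]; exact hcos
    have := (abs_sub_one_le_abs_cos h1 h2).trans h3
    rw [abs_le] at this
    constructor <;> linarith [this.1, this.2]

/-- The set of momenta whose cosine-squared lies below the sector-`s` threshold. -/
def secSet (M : ℝ) (s : ℕ) : Set ℝ := {k : ℝ | Real.cos (π * k / 2) ^ 2 ≤ 2 / M ^ (2 * s)}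

lemma measurableSet_secSet (M : ℝ) (s : ℕ) : MeasurableSet (secSet M s) :=
  measurableSet_le (by fun_prop) measurable_const

lemma meas_bound {M : ℝ} (hM : 2 ≤ M) (s : ℕ) :
    (volume (secSet M s ∩ Set.Icc (-2 : ℝ) 2)).toReal ≤ 8 / M ^ s := by
  unfold secSet
  have hM0 : (0:ℝ) < M := by linarith
  rcases Nat.eq_zero_or_pos s with rfl | hs
  · have h1 : volume ({k : ℝ | Real.cos (π * k / 2) ^ 2 ≤ 2 / M ^ (2 * 0)} ∩
        Set.Icc (-2 : ℝ) 2) ≤ volume (Set.Icc (-2 : ℝ) 2) :=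
      measure_mono Set.inter_subset_right
    rw [Real.volume_Icc] at h1
    have := ENNReal.toReal_mono (by simp) h1
    rw [ENNReal.toReal_ofReal (by norm_num)] at this
    simpa using this.trans (by norm_num)
  · set ε : ℝ := Real.sqrt 2 / M ^ s with hε
    have hε0 : 0 ≤ ε := by positivity
    have hsub : {k : ℝ | Real.cos (π * k / 2) ^ 2 ≤ 2 / M ^ (2 * s)} ∩
        Set.Icc (-2 : ℝ) 2 ⊆
        Set.Icc (1 - ε) (1 + ε) ∪ Set.Icc (-1 - ε) (-1 + ε) := by
      rintro k ⟨h1, h2⟩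
      exact mem_two_intervals hM0 h2 h1
    have h1 := measure_mono (μ := (volume : MeasureTheory.Measure ℝ)) hsub
    have h2 : volume (Set.Icc (1 - ε) (1 + ε) ∪ Set.Icc (-1 - ε) (-1 + ε)) ≤
        ENNReal.ofReal (2 * ε) + ENNReal.ofReal (2 * ε) := by
      refine (measure_union_le _ _).trans ?_
      rw [Real.volume_Icc, Real.volume_Icc,
        show (1 + ε) - (1 - ε) = 2 * ε by ring,
        show (-1 + ε) - (-1 - ε) = 2 * ε by ring]
    have h3 := ENNReal.toReal_mono
      (ENNReal.add_ne_top.2 ⟨ENNReal.ofReal_ne_top, ENNReal.ofReal_ne_top⟩)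
      (h1.trans h2)
    rw [ENNReal.toReal_add ENNReal.ofReal_ne_top ENNReal.ofReal_ne_top,
      ENNReal.toReal_ofReal (by positivity)] at h3
    have hsqrt2 : Real.sqrt 2 ≤ 2 := by
      nlinarith [Real.sq_sqrt (show (0:ℝ) ≤ 2 by norm_num), Real.sqrt_nonneg 2]
    have hMs : (0:ℝ) < M ^ s := by positivity
    refine h3.trans ?_
    rw [hε, le_div_iff₀ hMs]
    have : Real.sqrt 2 / M ^ s * M ^ s = Real.sqrt 2 := by field_simp
    nlinarith

variable {u : ℝ → ℝ} {M : ℝ} {i s : ℕ} {r c : ℝ}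

lemma abs_sliceCut_le (hu0 : ∀ r, 0 ≤ u r) (hu1 : ∀ r, u r ≤ 1) :
    |sliceCut u M i r| ≤ 1 := by
  unfold sliceCut
  rw [abs_le]
  constructor <;> [linarith [hu0 (M ^ (2 * (i - 1)) * r), hu1 (M ^ (2 * i) * r)];
    linarith [hu1 (M ^ (2 * (i - 1)) * r), hu0 (M ^ (2 * i) * r)]]

lemma abs_vCut_le (hu0 : ∀ r, 0 ≤ u r) (hu1 : ∀ r, u r ≤ 1) :
    |vCut u M i s r| ≤ 1 := by
  unfold vCut
  split_ifs <;> rw [abs_le] <;> constructor <;>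
    first
      | linarith [hu0 (M ^ 2 * r), hu1 (M ^ 2 * r)]
      | linarith [hu0 (M ^ (2 * i) * r), hu1 (M ^ (2 * i) * r)]
      | linarith [hu0 (M ^ (2 * s) * r), hu1 (M ^ (2 * s) * r),
          hu0 (M ^ (2 * s + 2) * r), hu1 (M ^ (2 * s + 2) * r)]

lemma vCut_support (hM : 2 ≤ M) (huz : ∀ r : ℝ, 2 < |r| → u r = 0)
    (hc0 : 0 ≤ c) (hc1 : c ≤ 1) (h : vCut u M i s c ≠ 0) :
    c ≤ 2 / M ^ (2 * s) := by
  have hM0 : (0:ℝ) < M := by linarith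
  have hMs : (0:ℝ) < M ^ (2 * s) := by positivity
  rcases Nat.eq_zero_or_pos s with rfl | hs
  · have h1 : M ^ (2 * 0) = (1:ℝ) := by norm_num
    rw [h1]
    norm_num
    linarith
  · by_contra hgt
    push_neg at hgt
    rw [div_lt_iff₀ hMs] at hgt
    have key : 2 < M ^ (2 * s) * c := by nlinarith
    have e1 : u (M ^ (2 * s) * c) = 0 := huz _ (by
      rw [abs_of_nonneg (by positivity)]; linarith)
    have e2 : u (M ^ (2 * s + 2) * c) = 0 := huz _ (by
      rw [abs_of_nonneg (by positivity)]
      have h2 : M ^ (2 * s) ≤ M ^ (2 * s + 2) :=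
        pow_le_pow_right₀ (by linarith) (by omega)
      nlinarith)
    apply h
    unfold vCut
    rw [if_neg (by omega)]
    by_cases hsi : s = i
    · rw [if_pos hsi, ← hsi]
      exact e1
    · rw [if_neg hsi, e1, e2]
      ring

lemma sliceCut_lb (hM : 2 ≤ M) (hone : ∀ r : ℝ, |r| < 1 → u r = 1)
    (hr : 0 ≤ r) (h : sliceCut u M i r ≠ 0) : 1 ≤ M ^ (2 * i) * r := by
  have hM0 : (0:ℝ) < M := by linarith
  by_contra hlt
  push_neg at hlt
  have h2 : M ^ (2 * (i - 1)) * r ≤ M ^ (2 * i) * r := by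
    have : M ^ (2 * (i - 1)) ≤ M ^ (2 * i) :=
      pow_le_pow_right₀ (by linarith) (by omega)
    exact mul_le_mul_of_nonneg_right this hr
  have e1 : u (M ^ (2 * i) * r) = 1 := hone _ (by
    rw [abs_of_nonneg (by positivity)]; exact hlt)
  have e2 : u (M ^ (2 * (i - 1)) * r) = 1 := hone _ (by
    rw [abs_of_nonneg (by positivity)]; linarith)
  exact h (by unfold sliceCut; rw [e1, e2]; ring)

lemma sliceCut_ub (hM : 2 ≤ M) (huz : ∀ r : ℝ, 2 < |r| → u r = 0)
    (hr : 0 ≤ r) (h : sliceCut u M i r ≠ 0) : M ^ (2 * (i - 1)) * r ≤ 2 := by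
  have hM0 : (0:ℝ) < M := by linarith
  by_contra hlt
  push_neg at hlt
  have h2 : M ^ (2 * (i - 1)) * r ≤ M ^ (2 * i) * r := by
    have : M ^ (2 * (i - 1)) ≤ M ^ (2 * i) :=
      pow_le_pow_right₀ (by linarith) (by omega)
    exact mul_le_mul_of_nonneg_right this hr
  have e1 : u (M ^ (2 * (i - 1)) * r) = 0 := huz _ (by
    rw [abs_of_nonneg (by positivity)]; exact hlt)
  have e2 : u (M ^ (2 * i) * r) = 0 := huz _ (by
    rw [abs_of_nonneg (by positivity)]; linarith)
  exact h (by unfold sliceCut; rw [e1, e2]; ring)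

lemma denom_norm_sq (a c : ℝ) :
    ‖Complex.I * (a : ℂ) - (c : ℂ)‖ ^ 2 = a ^ 2 + c ^ 2 := by
  rw [Complex.sq_norm]
  simp [Complex.normSq_apply, Complex.sub_re, Complex.sub_im, Complex.mul_re,
    Complex.mul_im]
  ring

noncomputable def integrand (u : ℝ → ℝ) (M β : ℝ) (i sp sm : ℕ)
    (x0 xp xm : ℝ) (n : ℤ) (kp km : ℝ) : ℂ :=
  Complex.exp (Complex.I *
      (((2 * (n : ℝ) + 1) * π / β) * x0 + kp * xp + km * xm : ℝ)) *
    ((sliceCut u M i (((2 * (n : ℝ) + 1) * π / β) ^ 2 +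
        4 * Real.cos (π * kp / 2) ^ 2 * Real.cos (π * km / 2) ^ 2) *
      vCut u M i sp (Real.cos (π * kp / 2) ^ 2) *
      vCut u M i sm (Real.cos (π * km / 2) ^ 2) : ℝ)) /
  (Complex.I * (((2 * (n : ℝ) + 1) * π / β : ℝ) : ℂ) -
    ((2 * Real.cos (π * kp / 2) * Real.cos (π * km / 2) : ℝ) : ℂ))

noncomputable def term (u : ℝ → ℝ) (M β : ℝ) (i sp sm : ℕ)
    (x0 xp xm : ℝ) (n : ℤ) : ℂ :=
  ∫ kp in Set.Icc (-2 : ℝ) 2, ∫ km in Set.Icc (-2 : ℝ) 2,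
    integrand u M β i sp sm x0 xp xm n kp km

lemma norm_exp_I_mul (t : ℝ) : ‖Complex.exp (Complex.I * (t : ℂ))‖ = 1 := by
  rw [mul_comm, Complex.norm_exp_ofReal_mul_I]

variable {β x0 xp xm : ℝ} {sp sm : ℕ} {n : ℤ}

lemma term_zero (hM : 2 ≤ M) (huz : ∀ r : ℝ, 2 < |r| → u r = 0) (hi : 1 ≤ i)
    (hn : 2 / M ^ (2 * (i - 1)) < ((2 * (n : ℝ) + 1) * π / β) ^ 2) :
    term u M β i sp sm x0 xp xm n = 0 := by
  have hM0 : (0:ℝ) < M := by linarith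
  have hQ : (0:ℝ) < M ^ (2 * (i - 1)) := by positivity
  have hz : ∀ kp km : ℝ, integrand u M β i sp sm x0 xp xm n kp km = 0 := by
    intro kp km
    set r : ℝ := ((2 * (n : ℝ) + 1) * π / β) ^ 2 +
      4 * Real.cos (π * kp / 2) ^ 2 * Real.cos (π * km / 2) ^ 2 with hr
    clear_value r
    have hr0 : ((2 * (n : ℝ) + 1) * π / β) ^ 2 ≤ r := by
      rw [hr]
      nlinarith [sq_nonneg (Real.cos (π * kp / 2) * Real.cos (π * km / 2))]
    have hrpos : 0 < r := lt_of_lt_of_le (lt_of_lt_of_le (by positivity) hn.le) hr0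
    have h1 : 2 < M ^ (2 * (i - 1)) * r := by
      rw [div_lt_iff₀ hQ] at hn
      have h2 : M ^ (2 * (i - 1)) * (((2 * (n : ℝ) + 1) * π / β) ^ 2) ≤
          M ^ (2 * (i - 1)) * r := mul_le_mul_of_nonneg_left hr0 hQ.le
      have h3 : (((2 * (n : ℝ) + 1) * π / β) ^ 2) * M ^ (2 * (i - 1)) =
          M ^ (2 * (i - 1)) * (((2 * (n : ℝ) + 1) * π / β) ^ 2) := mul_comm _ _
      linarith
    have e1 : u (M ^ (2 * (i - 1)) * r) = 0 := huz _ (by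
      rw [abs_of_pos (by positivity)]; exact h1)
    have e2 : u (M ^ (2 * i) * r) = 0 := huz _ (by
      rw [abs_of_pos (by positivity)]
      have h2 : M ^ (2 * (i - 1)) ≤ M ^ (2 * i) :=
        pow_le_pow_right₀ (by linarith) (by omega)
      nlinarith)
    have hsl : sliceCut u M i r = 0 := by
      unfold sliceCut; rw [e1, e2]; ring
    unfold integrand
    rw [← hr, hsl]
    simp
  unfold term
  simp only [hz, integral_zero]

lemma term_bound (hM : 2 ≤ M) (hu0 : ∀ r, 0 ≤ u r) (hu1 : ∀ r, u r ≤ 1)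
    (hone : ∀ r : ℝ, |r| < 1 → u r = 1) (huz : ∀ r : ℝ, 2 < |r| → u r = 0)
    (hi : 1 ≤ i) :
    ‖term u M β i sp sm x0 xp xm n‖ ≤ M ^ i * (8 / M ^ sp) * (8 / M ^ sm) := by
  have hM0 : (0:ℝ) < M := by linarith
  have hMi : (0:ℝ) < (M ^ i)⁻¹ := by positivity
  -- pointwise bound
  have hpoint : ∀ kp km : ℝ,
      ‖integrand u M β i sp sm x0 xp xm n kp km‖ ≤
        (secSet M sp).indicator (fun _ => (1:ℝ)) kp *
          (secSet M sm).indicator (fun _ => (M:ℝ) ^ i) km := by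
    intro kp km
    set R : ℝ := sliceCut u M i (((2 * (n : ℝ) + 1) * π / β) ^ 2 +
        4 * Real.cos (π * kp / 2) ^ 2 * Real.cos (π * km / 2) ^ 2) *
      vCut u M i sp (Real.cos (π * kp / 2) ^ 2) *
      vCut u M i sm (Real.cos (π * km / 2) ^ 2) with hR
    by_cases hR0 : R = 0
    · have : integrand u M β i sp sm x0 xp xm n kp km = 0 := by
        unfold integrand; rw [← hR, hR0]; simp
      rw [this, norm_zero]
      apply mul_nonneg <;> exact Set.indicator_nonneg (fun _ _ => by positivity) _
    · obtain ⟨hab, hvm⟩ := mul_ne_zero_iff.1 hR0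
      obtain ⟨hsl, hvp⟩ := mul_ne_zero_iff.1 hab
      have hkp : kp ∈ secSet M sp := vCut_support hM huz (sq_nonneg _)
        (Real.cos_sq_le_one _) hvp
      have hkm : km ∈ secSet M sm := vCut_support hM huz (sq_nonneg _)
        (Real.cos_sq_le_one _) hvm
      rw [Set.indicator_of_mem hkp, Set.indicator_of_mem hkm, one_mul]
      have hnorm : ‖integrand u M β i sp sm x0 xp xm n kp km‖ =
          |R| / ‖Complex.I * (((2 * (n : ℝ) + 1) * π / β : ℝ) : ℂ) -
            ((2 * Real.cos (π * kp / 2) * Real.cos (π * km / 2) : ℝ) : ℂ)‖ := by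
        unfold integrand
        rw [← hR, norm_div, norm_mul, norm_exp_I_mul, Complex.norm_real, one_mul,
          Real.norm_eq_abs]
      rw [hnorm]
      -- denominator lower bound
      have hrpos : (0:ℝ) ≤ ((2 * (n : ℝ) + 1) * π / β) ^ 2 +
          4 * Real.cos (π * kp / 2) ^ 2 * Real.cos (π * km / 2) ^ 2 := by
        nlinarith [sq_nonneg (Real.cos (π * kp / 2) * Real.cos (π * km / 2)),
          sq_nonneg ((2 * (n : ℝ) + 1) * π / β)]
      have hlb := sliceCut_lb hM hone hrpos hsl
      have hM2i : (0:ℝ) < M ^ (2 * i) := by positivity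
      have hd2 : ((M ^ i)⁻¹ : ℝ) ^ 2 ≤
          ‖Complex.I * (((2 * (n : ℝ) + 1) * π / β : ℝ) : ℂ) -
            ((2 * Real.cos (π * kp / 2) * Real.cos (π * km / 2) : ℝ) : ℂ)‖ ^ 2 := by
        rw [denom_norm_sq]
        have h1 : ((M ^ i)⁻¹ : ℝ) ^ 2 = (M ^ (2 * i))⁻¹ := by
          rw [inv_pow, ← pow_mul, Nat.mul_comm i 2]
        rw [h1, ← one_div, div_le_iff₀ hM2i]
        nlinarith
      have hd : ((M ^ i)⁻¹ : ℝ) ≤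
          ‖Complex.I * (((2 * (n : ℝ) + 1) * π / β : ℝ) : ℂ) -
            ((2 * Real.cos (π * kp / 2) * Real.cos (π * km / 2) : ℝ) : ℂ)‖ := by
        have := Real.sqrt_le_sqrt hd2
        rwa [Real.sqrt_sq hMi.le, Real.sqrt_sq (norm_nonneg _)] at this
      have hRle : |R| ≤ 1 := by
        rw [hR, abs_mul, abs_mul]
        have b1 := abs_sliceCut_le (u := u) (M := M) (i := i)
          (r := ((2 * (n : ℝ) + 1) * π / β) ^ 2 +
            4 * Real.cos (π * kp / 2) ^ 2 * Real.cos (π * km / 2) ^ 2) hu0 hu1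
        have b2 := abs_vCut_le (u := u) (M := M) (i := i) (s := sp)
          (r := Real.cos (π * kp / 2) ^ 2) hu0 hu1
        have b3 := abs_vCut_le (u := u) (M := M) (i := i) (s := sm)
          (r := Real.cos (π * km / 2) ^ 2) hu0 hu1
        have n1 := abs_nonneg (sliceCut u M i (((2 * (n : ℝ) + 1) * π / β) ^ 2 +
          4 * Real.cos (π * kp / 2) ^ 2 * Real.cos (π * km / 2) ^ 2))
        have n2 := abs_nonneg (vCut u M i sp (Real.cos (π * kp / 2) ^ 2))
        have n3 := abs_nonneg (vCut u M i sm (Real.cos (π * km / 2) ^ 2))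
        exact mul_le_one₀ (mul_le_one₀ b1 n2 b2) n3 b3
      calc |R| / ‖_‖ ≤ 1 / (M ^ i)⁻¹ := div_le_div₀ (by norm_num) hRle hMi hd
        _ = M ^ i := by rw [one_div, inv_inv]
  have hinner : ∀ kp : ℝ,
      ‖∫ km in Set.Icc (-2:ℝ) 2, integrand u M β i sp sm x0 xp xm n kp km‖ ≤
        (secSet M sp).indicator (fun _ => (M:ℝ) ^ i * (8 / M ^ sm)) kp := by
    intro kp
    by_cases hkp : kp ∈ secSet M sp
    · rw [Set.indicator_of_mem hkp]
      have hInt : Integrable ((secSet M sm).indicator (fun _ => (M:ℝ) ^ i))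
          (volume.restrict (Set.Icc (-2:ℝ) 2)) :=
        (integrableOn_const measure_Icc_lt_top.ne).indicator
          (measurableSet_secSet M sm)
      refine (norm_integral_le_of_norm_le hInt (Filter.Eventually.of_forall
        fun km => ?_)).trans ?_
      · have h := hpoint kp km
        rwa [Set.indicator_of_mem hkp, one_mul] at h
      · rw [integral_indicator_const _ (measurableSet_secSet M sm), measureReal_def,
          Measure.restrict_apply (measurableSet_secSet M sm), smul_eq_mul]
        have hm := meas_bound hM sm
        have hMipos : (0:ℝ) < M ^ i := by positivity
        calc (volume (secSet M sm ∩ Set.Icc (-2:ℝ) 2)).toReal * M ^ i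
            ≤ (8 / M ^ sm) * M ^ i := mul_le_mul_of_nonneg_right hm hMipos.le
          _ = M ^ i * (8 / M ^ sm) := by ring
    · rw [Set.indicator_of_notMem hkp]
      have hz : ∀ km : ℝ, integrand u M β i sp sm x0 xp xm n kp km = 0 := by
        intro km
        have hv : vCut u M i sp (Real.cos (π * kp / 2) ^ 2) = 0 := by
          by_contra hne
          exact hkp (vCut_support hM huz (sq_nonneg _) (Real.cos_sq_le_one _) hne)
        unfold integrand
        rw [hv]
        simp
      simp [hz]
  have hIntp : Integrable ((secSet M sp).indicator (fun _ => (M:ℝ) ^ i * (8 / M ^ sm)))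
      (volume.restrict (Set.Icc (-2:ℝ) 2)) :=
    (integrableOn_const measure_Icc_lt_top.ne).indicator
      (measurableSet_secSet M sp)
  have h := norm_integral_le_of_norm_le hIntp (Filter.Eventually.of_forall hinner)
  rw [integral_indicator_const _ (measurableSet_secSet M sp), measureReal_def,
    Measure.restrict_apply (measurableSet_secSet M sp), smul_eq_mul] at h
  refine le_trans h ?_
  have hm := meas_bound hM sp
  have hc : (0:ℝ) ≤ M ^ i * (8 / M ^ sm) := by positivity
  calc (volume (secSet M sp ∩ Set.Icc (-2:ℝ) 2)).toReal * (M ^ i * (8 / M ^ sm))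
      ≤ (8 / M ^ sp) * (M ^ i * (8 / M ^ sm)) := mul_le_mul_of_nonneg_right hm hc
    _ = M ^ i * (8 / M ^ sp) * (8 / M ^ sm) := by ring

end SectorAux

set_option maxHeartbeats 2000000 in
/-- Sector propagator prefactor bound: there is a constant `c > 0` depending only on `M`
such that `|C_{i,σ}(x)| ≤ c M^{-i-l}` for every admissible cutoff `u`, inverse
temperature `β > 0`, slice `i ≥ 1`, sector `σ = (s₊, s₋)` of depth
`l = s₊ + s₋ - i + 2`, and every `x`. -/
theorem sector_propagator_prefactor_bound (M : ℝ) (hM : 2 ≤ M) :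
    ∃ c : ℝ, 0 < c ∧
      ∀ u : ℝ → ℝ, Measurable u → (∀ r, 0 ≤ u r) → (∀ r, u r ≤ 1) →
        (∀ r : ℝ, |r| < 1 → u r = 1) → (∀ r : ℝ, 2 < |r| → u r = 0) →
      ∀ β : ℝ, 0 < β → ∀ i : ℕ, 1 ≤ i →
      ∀ sp sm : ℕ, sp ≤ i → sm ≤ i → i ≤ sp + sm + 2 →
      ∀ x0 xp xm : ℝ,
        ‖sectorProp u M β i sp sm x0 xp xm‖ ≤
          c * M ^ (-(((i : ℝ) + ((sp : ℝ) + (sm : ℝ) - (i : ℝ) + 2)))) := by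
  have hM0 : (0:ℝ) < M := by linarith
  refine ⟨20 * M ^ 3, by positivity, ?_⟩
  intro u hu hu0 hu1 hone huz β hβ i hi sp sm hsp hsm hspm x0 xp xm
  have hπ := Real.pi_pos
  have hRHS : M ^ (-(((i : ℝ) + ((sp : ℝ) + (sm : ℝ) - (i : ℝ) + 2)))) =
      ((M ^ (sp + sm + 2) : ℝ))⁻¹ := by
    rw [show (-(((i : ℝ) + ((sp : ℝ) + (sm : ℝ) - (i : ℝ) + 2)))) =
        -(((sp + sm + 2 : ℕ) : ℝ)) by push_cast; ring, Real.rpow_neg hM0.le,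
      Real.rpow_natCast]
  rw [hRHS]
  have hprop : sectorProp u M β i sp sm x0 xp xm =
      (1 / (16 * β) : ℂ) * ∑' n : ℤ, SectorAux.term u M β i sp sm x0 xp xm n := rfl
  rw [hprop, norm_mul]
  have hco : ‖(1 / (16 * β) : ℂ)‖ = 1 / (16 * β) := by
    rw [show (1 / (16 * β) : ℂ) = ((1 / (16 * β) : ℝ) : ℂ) by push_cast; ring,
      Complex.norm_real, Real.norm_eq_abs, abs_of_pos (by positivity)]
  rw [hco]
  have hP : (0:ℝ) < M ^ (i - 1) := by positivity
  have hEeq : 2 / M ^ (2 * (i - 1)) = (Real.sqrt 2 / M ^ (i - 1)) ^ 2 := by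
    rw [div_pow, Real.sq_sqrt (by norm_num : (0:ℝ) ≤ 2), ← pow_mul,
      Nat.mul_comm (i - 1) 2]
  by_cases hcase : Real.sqrt 2 / M ^ (i - 1) < π / β
  · -- all Matsubara terms vanish
    have hzero : ∀ n : ℤ, SectorAux.term u M β i sp sm x0 xp xm n = 0 := by
      intro n
      apply SectorAux.term_zero hM huz hi
      have hlt : (Real.sqrt 2 / M ^ (i - 1)) ^ 2 < (π / β) ^ 2 :=
        pow_lt_pow_left₀ hcase (by positivity) two_ne_zero
      have h1 : (1:ℝ) ≤ (2 * (n : ℝ) + 1) ^ 2 := by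
        have hz : (1:ℤ) ≤ (2 * n + 1) ^ 2 := by
          rcases le_or_gt 0 n with h | h <;> nlinarith
        exact_mod_cast hz
      have hexp : ((2 * (n : ℝ) + 1) * π / β) ^ 2 =
          (2 * (n : ℝ) + 1) ^ 2 * (π / β) ^ 2 := by ring
      rw [hEeq, hexp]
      nlinarith [mul_le_mul_of_nonneg_right h1 (sq_nonneg (π / β))]
    have hfun : (fun n : ℤ => SectorAux.term u M β i sp sm x0 xp xm n) =
        fun _ => 0 := funext hzero
    rw [hfun, tsum_zero, norm_zero, mul_zero]
    positivity
  · push_neg at hcase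
    set K : ℝ := β * (Real.sqrt 2 / M ^ (i - 1)) / π with hK
    clear_value K
    have hK1 : 1 ≤ K := by
      rw [hK, le_div_iff₀ hπ, one_mul]
      rw [div_le_iff₀ hβ] at hcase
      nlinarith
    have hK0 : 0 < K := by linarith
    set N : ℕ := ⌈K⌉₊ with hN
    have hKN : K ≤ (N : ℝ) := Nat.le_ceil K
    have hNK : (N : ℝ) ≤ K + 1 := (Nat.ceil_lt_add_one hK0.le).le
    clear_value N
    set S : Finset ℤ := Finset.Icc (-(N : ℤ)) (N : ℤ) with hS
    clear_value S
    have hvanish : ∀ n ∉ S, SectorAux.term u M β i sp sm x0 xp xm n = 0 := by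
      intro n hn
      rw [hS, Finset.mem_Icc] at hn
      have hn' : (N : ℤ) + 1 ≤ n ∨ n ≤ -(N : ℤ) - 1 := by omega
      apply SectorAux.term_zero hM huz hi
      have hsqZ : (2 * (N : ℤ) + 1) ^ 2 ≤ (2 * n + 1) ^ 2 := by
        rcases hn' with h | h <;> nlinarith
      have hsqR : (2 * (N : ℝ) + 1) ^ 2 ≤ (2 * (n : ℝ) + 1) ^ 2 := by
        exact_mod_cast hsqZ
      have hKlt : K < 2 * (N : ℝ) + 1 := by
        have := Nat.cast_nonneg (α := ℝ) N
        linarith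
      have hsqrtval : Real.sqrt 2 / M ^ (i - 1) = K * π / β := by
        rw [hK]; field_simp
      have hπβ : 0 < π / β := by positivity
      have e1 : (K * π / β) ^ 2 = K ^ 2 * (π / β) ^ 2 := by ring
      have e2 : ((2 * (n : ℝ) + 1) * π / β) ^ 2 =
          (2 * (n : ℝ) + 1) ^ 2 * (π / β) ^ 2 := by ring
      have hKsq : K ^ 2 < (2 * (N : ℝ) + 1) ^ 2 := by nlinarith
      rw [hEeq, hsqrtval, e1, e2]
      exact mul_lt_mul_of_pos_right (lt_of_lt_of_le hKsq hsqR) (by positivity)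
    rw [tsum_eq_sum hvanish]
    have hbound : ∀ n ∈ S, ‖SectorAux.term u M β i sp sm x0 xp xm n‖ ≤
        M ^ i * (8 / M ^ sp) * (8 / M ^ sm) := fun n _ =>
      SectorAux.term_bound hM hu0 hu1 hone huz hi
    have hsum : ‖∑ n ∈ S, SectorAux.term u M β i sp sm x0 xp xm n‖ ≤
        (S.card : ℝ) * (M ^ i * (8 / M ^ sp) * (8 / M ^ sm)) := by
      refine (norm_sum_le _ _).trans ?_
      have := Finset.sum_le_card_nsmul S
        (fun n => ‖SectorAux.term u M β i sp sm x0 xp xm n‖)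
        (M ^ i * (8 / M ^ sp) * (8 / M ^ sm)) hbound
      rwa [nsmul_eq_mul] at this
    have hcard : (S.card : ℝ) = 2 * (N : ℝ) + 1 := by
      have : S.card = 2 * N + 1 := by
        rw [hS, Int.card_Icc]
        omega
      rw [this]; push_cast; ring
    have hβ16 : (0:ℝ) < 1 / (16 * β) := by positivity
    have step1 : 1 / (16 * β) * ‖∑ n ∈ S, SectorAux.term u M β i sp sm x0 xp xm n‖ ≤
        1 / (16 * β) * ((2 * (N : ℝ) + 1) *
          (M ^ i * (8 / M ^ sp) * (8 / M ^ sm))) := by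
      rw [← hcard]
      exact mul_le_mul_of_nonneg_left (by rw [hcard] at hsum ⊢; exact hsum) hβ16.le
    refine step1.trans ?_
    -- final arithmetic
    have hMi : M ^ i = M ^ (i - 1) * M := by
      conv_lhs => rw [show i = (i - 1) + 1 by omega]
      rw [pow_succ]
    have hpow : (M:ℝ) ^ (sp + sm + 2) = M ^ sp * M ^ sm * M ^ 2 := by
      rw [pow_add, pow_add]
    have ha : (0:ℝ) < M ^ sp := by positivity
    have hb : (0:ℝ) < M ^ sm := by positivity
    have hsqrtpi : Real.sqrt 2 ≤ π := by
      have h2 : Real.sqrt 2 ≤ 2 := by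
        nlinarith [Real.sq_sqrt (show (0:ℝ) ≤ 2 by norm_num), Real.sqrt_nonneg 2]
      linarith [Real.pi_gt_three]
    have key : (2 * (N : ℝ) + 1) * M ^ (i - 1) ≤ 5 * β := by
      have hKP : K * M ^ (i - 1) = β * Real.sqrt 2 / π := by
        rw [hK]; field_simp
      have h1 : 2 * (N : ℝ) + 1 ≤ 5 * K := by linarith
      have h2 : (2 * (N : ℝ) + 1) * M ^ (i - 1) ≤ 5 * K * M ^ (i - 1) :=
        mul_le_mul_of_nonneg_right h1 hP.le
      have h3 : 5 * K * M ^ (i - 1) = 5 * (β * Real.sqrt 2 / π) := by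
        rw [mul_assoc, hKP]
      have h4 : β * Real.sqrt 2 / π ≤ β := by
        rw [div_le_iff₀ hπ]
        nlinarith [Real.sqrt_nonneg 2]
      linarith
    calc 1 / (16 * β) * ((2 * (N : ℝ) + 1) * (M ^ i * (8 / M ^ sp) * (8 / M ^ sm)))
        = ((2 * (N : ℝ) + 1) * M ^ (i - 1)) * (4 * M / (β * (M ^ sp * M ^ sm))) := by
          rw [hMi]; field_simp; ring
      _ ≤ (5 * β) * (4 * M / (β * (M ^ sp * M ^ sm))) :=
          mul_le_mul_of_nonneg_right key (by positivity)
      _ = 20 * M ^ 3 * ((M:ℝ) ^ (sp + sm + 2))⁻¹ := by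
          rw [hpow]; field_simp; ring
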